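/- arXiv:1911.07504 — 5 statements merged into one kernel-verified Lean document; each statement's English description precedes it below -/
import Mathlib

section
/- Let P ⊆ ℝ² be a finite nonempty set and let u ∈ ℝ² be a unit vector. Put m := min_{p∈P} ⟨p,u⟩, M := max_{p∈P} ⟨p,u⟩, and w* := max_{p∈P} min(M − ⟨p,u⟩, ⟨p,u⟩ − m). Then w* is the least element of the set of all w ≥ 0 for which there exist reals c, d with c + w ≤ d − w such that every p ∈ P satisfies c ≤ ⟨p,u⟩ ≤ c + w or d − w ≤ ⟨p,u⟩ ≤ d. In other words, w* is the minimum width of a double-strip with normal u enclosing P, and it is attained by the double-strip whose outer strip is the minimum-width strip [m, M] enclosing P. -/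
/-!
Project `P` onto the normal: a double-strip with normal `u` is the preimage of a union of two
intervals `[c, c + w] ∪ [d - w, d]` with `c + w ≤ d - w`. A projection `t` in the lower interval
has `t - m ≤ w`, since `m` lies in the lower interval too or else above it; symmetrically a
projection in the upper interval has `M - t ≤ w`. Conversely the intervals `[m, m + w*]` and
`[M - w*, M]` cover all projections, and `2 w* ≤ M - m` because `2 min (M - t) (t - m) ≤ M - m`.
-/

open Set

section DoubleInterval

variable {α : Type*} [AddCommGroup α] [LinearOrder α] [IsOrderedAddMonoid α]

def doubleInterval (c d w : α) : Set α := Icc c (c + w) ∪ Icc (d - w) d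

theorem min_sub_sub_le_of_mem_doubleInterval {c d w m M t : α} (hcd : c + w ≤ d - w)
    (hm : m ∈ doubleInterval c d w) (hM : M ∈ doubleInterval c d w)
    (ht : t ∈ doubleInterval c d w) :
    min (M - t) (t - m) ≤ w := by
  rcases ht with ⟨hct, htc⟩ | ⟨hdt, htd⟩
  · refine (min_le_right _ _).trans ?_
    rcases hm with ⟨hcm, hmc⟩ | ⟨hdm, hmd⟩ <;> grind
  · refine (min_le_left _ _).trans ?_
    rcases hM with ⟨hcM, hMc⟩ | ⟨hdM, hMd⟩ <;> grind

theorem mem_doubleInterval_of_min_sub_sub_le {m M w t : α} (hmt : m ≤ t) (htM : t ≤ M)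
    (h : min (M - t) (t - m) ≤ w) : t ∈ doubleInterval m M w := by
  rcases min_le_iff.1 h with h | h
  · exact Or.inr ⟨by grind, htM⟩
  · exact Or.inl ⟨hmt, by grind⟩

theorem min_sub_add_min_sub_le (m M t : α) : min (M - t) (t - m) + min (M - t) (t - m) ≤ M - m :=
  (add_le_add (min_le_left _ _) (min_le_right _ _)).trans_eq (sub_add_sub_cancel M t m)

variable {ι : Type*} (s : Finset ι) (hs : s.Nonempty) (f : ι → α)

theorem isLeast_width_doubleInterval :
    IsLeast {w : α | 0 ≤ w ∧ ∃ c d : α, c + w ≤ d - w ∧ ∀ i ∈ s, f i ∈ doubleInterval c d w}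
      (s.sup' hs fun i => min (s.sup' hs f - f i) (f i - s.inf' hs f)) := by
  obtain ⟨im, him, hfim⟩ := s.exists_mem_eq_inf' hs f
  obtain ⟨iM, hiM, hfiM⟩ := s.exists_mem_eq_sup' hs f
  set m := s.inf' hs f
  set M := s.sup' hs f
  have hm : ∀ i ∈ s, m ≤ f i := fun i hi => s.inf'_le f hi
  have hM : ∀ i ∈ s, f i ≤ M := fun i hi => s.le_sup' f hi
  obtain ⟨i₀, hi₀, hwi₀⟩ := s.exists_mem_eq_sup' hs fun i => min (M - f i) (f i - m)
  refine ⟨⟨?_, m, M, ?_, fun i hi => ?_⟩, ?_⟩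
  · rw [hwi₀]
    exact le_min (sub_nonneg.2 (hM i₀ hi₀)) (sub_nonneg.2 (hm i₀ hi₀))
  · rw [hwi₀, le_sub_iff_add_le, add_assoc, ← le_sub_iff_add_le']
    exact min_sub_add_min_sub_le m M (f i₀)
  · exact mem_doubleInterval_of_min_sub_sub_le (hm i hi) (hM i hi)
      (s.le_sup' (fun i => min (M - f i) (f i - m)) hi)
  · rintro w ⟨-, c, d, hcd, hcover⟩
    refine Finset.sup'_le hs _ fun i hi => ?_
    exact min_sub_sub_le_of_mem_doubleInterval hcd (hfim ▸ hcover im him) (hfiM ▸ hcover iM hiM)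
      (hcover i hi)

end DoubleInterval

theorem minWidth_double_strip_fixed_orientation_general
    (P : Finset (EuclideanSpace ℝ (Fin 2))) (hP : P.Nonempty)
    (u : EuclideanSpace ℝ (Fin 2))
    (m M wstar : ℝ)
    (hm : m = P.inf' hP fun p => (inner ℝ p u : ℝ))
    (hM : M = P.sup' hP fun p => (inner ℝ p u : ℝ))
    (hw : wstar = P.sup' hP fun p =>
      min (M - (inner ℝ p u : ℝ)) ((inner ℝ p u : ℝ) - m)) :
    IsLeast {w : ℝ | 0 ≤ w ∧ ∃ c d : ℝ, c + w ≤ d - w ∧ ∀ p ∈ P,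
        (c ≤ (inner ℝ p u : ℝ) ∧ (inner ℝ p u : ℝ) ≤ c + w) ∨
        (d - w ≤ (inner ℝ p u : ℝ) ∧ (inner ℝ p u : ℝ) ≤ d)}
      wstar := by
  subst hm hM hw
  exact isLeast_width_doubleInterval P hP fun p => inner ℝ p u

/-- Minimum-width double-strip in a fixed orientation: for a finite nonempty
`P ⊆ ℝ²` and a unit vector `u`, with `m = min_{p∈P} ⟪p,u⟫`, `M = max_{p∈P} ⟪p,u⟫`,
the value `w* = max_{p∈P} min (M - ⟪p,u⟫) (⟪p,u⟫ - m)` is the least width `w ≥ 0`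
of a double-strip with normal `u` enclosing `P`. -/
theorem minWidth_double_strip_fixed_orientation
    (P : Finset (EuclideanSpace ℝ (Fin 2))) (hP : P.Nonempty)
    (u : EuclideanSpace ℝ (Fin 2)) (hu : ‖u‖ = 1)
    (m M wstar : ℝ)
    (hm : m = P.inf' hP fun p => (inner ℝ p u : ℝ))
    (hM : M = P.sup' hP fun p => (inner ℝ p u : ℝ))
    (hw : wstar = P.sup' hP fun p =>
      min (M - (inner ℝ p u : ℝ)) ((inner ℝ p u : ℝ) - m)) :
    IsLeast {w : ℝ | 0 ≤ w ∧ ∃ c d : ℝ, c + w ≤ d - w ∧ ∀ p ∈ P,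
        (c ≤ (inner ℝ p u : ℝ) ∧ (inner ℝ p u : ℝ) ≤ c + w) ∨
        (d - w ≤ (inner ℝ p u : ℝ) ∧ (inner ℝ p u : ℝ) ≤ d)}
      wstar :=
  minWidth_double_strip_fixed_orientation_general P hP u m M wstar hm hM hw
end

section
/- Let P ⊆ ℝ² be a finite nonempty set, let Q ⊆ P be nonempty, and let u ∈ ℝ² be a unit vector. Put m := min_{p∈P} ⟨p,u⟩, M := max_{p∈P} ⟨p,u⟩, and w*_Q := max_{q∈Q} min(M − ⟨q,u⟩, ⟨q,u⟩ − m). Then w*_Q is the least element of the set of all w ≥ 0 for which there exist reals c, d with c + w ≤ d − w such that c ≤ ⟨p,u⟩ ≤ d for every p ∈ P, and every q ∈ Q satisfies c ≤ ⟨q,u⟩ ≤ c + w or d − w ≤ ⟨q,u⟩ ≤ d. In other words, w*_Q is the minimum width of a P-constrained double-strip with normal u enclosing Q, and it is attained by the double-strip whose outer strip is the minimum-width strip [m, M] enclosing P. -/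
/-! Only the projection `p ↦ ⟪p, u⟫` matters, so the problem is one-dimensional. If the outer
strip `[c, d]` contains `[m, M]`, a point `x ∈ [m, M]` lying in `[c, c + w] ∪ [d - w, d]` is within
`w` of the nearer end of `[m, M]`; conversely the double strip over `[m, M]` itself encloses every
`q ∈ Q` at width `w*_Q`, and `w*_Q ≤ (M - m) / 2` keeps its two halves from overlapping. -/

section DoubleStrip

variable {c d m M w x : ℝ}

lemma min_sub_le_of_mem_doubleStrip (hc : c ≤ m) (hd : M ≤ d)
    (hx : (c ≤ x ∧ x ≤ c + w) ∨ (d - w ≤ x ∧ x ≤ d)) : min (M - x) (x - m) ≤ w := by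
  rcases hx with ⟨-, hx⟩ | ⟨hx, -⟩
  · exact (min_le_right _ _).trans (by linarith)
  · exact (min_le_left _ _).trans (by linarith)

lemma mem_doubleStrip_of_min_sub_le (hm : m ≤ x) (hM : x ≤ M)
    (hw : min (M - x) (x - m) ≤ w) : (m ≤ x ∧ x ≤ m + w) ∨ (M - w ≤ x ∧ x ≤ M) := by
  rcases min_le_iff.mp hw with h | h
  · exact Or.inr ⟨by linarith, hM⟩
  · exact Or.inl ⟨hm, by linarith⟩

lemma min_sub_le_half_sub : min (M - x) (x - m) ≤ (M - m) / 2 := by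
  have := min_le_left (M - x) (x - m)
  have := min_le_right (M - x) (x - m)
  linarith

end DoubleStrip

theorem isLeast_constrained_doubleStrip_width {α : Type*} (f : α → ℝ) {P Q : Finset α}
    (hP : P.Nonempty) (hQ : Q.Nonempty) (hQP : Q ⊆ P) :
    IsLeast {w : ℝ | 0 ≤ w ∧ ∃ c d : ℝ, c + w ≤ d - w ∧ (∀ p ∈ P, c ≤ f p ∧ f p ≤ d) ∧
        ∀ q ∈ Q, (c ≤ f q ∧ f q ≤ c + w) ∨ (d - w ≤ f q ∧ f q ≤ d)}
      (Q.sup' hQ fun q => min (P.sup' hP f - f q) (f q - P.inf' hP f)) := by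
  set m := P.inf' hP f
  set M := P.sup' hP f
  have hm : ∀ p ∈ P, m ≤ f p := fun p hp => P.inf'_le f hp
  have hM : ∀ p ∈ P, f p ≤ M := fun p hp => P.le_sup' f hp
  refine ⟨⟨?nonneg, m, M, ?disjoint, fun p hp => ⟨hm p hp, hM p hp⟩, ?encloses⟩, ?least⟩
  case nonneg =>
    obtain ⟨q, hq⟩ := id hQ
    exact (le_min (sub_nonneg.2 (hM q (hQP hq))) (sub_nonneg.2 (hm q (hQP hq)))).trans
      (Q.le_sup' (fun q => min (M - f q) (f q - m)) hq)
  case disjoint =>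
    have : Q.sup' hQ (fun q => min (M - f q) (f q - m)) ≤ (M - m) / 2 :=
      Q.sup'_le hQ _ fun q _ => min_sub_le_half_sub
    linarith
  case encloses =>
    exact fun q hq => mem_doubleStrip_of_min_sub_le (hm q (hQP hq)) (hM q (hQP hq))
      (Q.le_sup' (fun q => min (M - f q) (f q - m)) hq)
  case least =>
    rintro w ⟨-, c, d, -, hPcd, hQw⟩
    exact Q.sup'_le hQ _ fun q hq => min_sub_le_of_mem_doubleStrip
      (P.le_inf' hP f fun p hp => (hPcd p hp).1) (P.sup'_le hP f fun p hp => (hPcd p hp).2)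
      (hQw q hq)

theorem minWidth_constrained_double_strip_fixed_orientation_general
    (P Q : Finset (EuclideanSpace ℝ (Fin 2))) (hP : P.Nonempty) (hQ : Q.Nonempty)
    (hQP : Q ⊆ P)
    (u : EuclideanSpace ℝ (Fin 2))
    (m M wQ : ℝ)
    (hm : m = P.inf' hP fun p => (inner ℝ p u : ℝ))
    (hM : M = P.sup' hP fun p => (inner ℝ p u : ℝ))
    (hw : wQ = Q.sup' hQ fun q =>
      min (M - (inner ℝ q u : ℝ)) ((inner ℝ q u : ℝ) - m)) :
    IsLeast {w : ℝ | 0 ≤ w ∧ ∃ c d : ℝ, c + w ≤ d - w ∧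
        (∀ p ∈ P, c ≤ (inner ℝ p u : ℝ) ∧ (inner ℝ p u : ℝ) ≤ d) ∧
        ∀ q ∈ Q,
          (c ≤ (inner ℝ q u : ℝ) ∧ (inner ℝ q u : ℝ) ≤ c + w) ∨
          (d - w ≤ (inner ℝ q u : ℝ) ∧ (inner ℝ q u : ℝ) ≤ d)}
      wQ := by
  subst hw hm hM
  exact isLeast_constrained_doubleStrip_width _ hP hQ hQP

/-- Minimum-width `P`-constrained double-strip in a fixed orientation: for a
finite nonempty `P ⊆ ℝ²`, a nonempty `Q ⊆ P`, and a unit vector `u`, with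
`m = min_{p∈P} ⟪p,u⟫` and `M = max_{p∈P} ⟪p,u⟫`, the value
`w*_Q = max_{q∈Q} min (M - ⟪q,u⟫) (⟪q,u⟫ - m)` is the least width `w ≥ 0` of a
double-strip with normal `u` whose outer strip contains `P` and which
encloses `Q`. -/
theorem minWidth_constrained_double_strip_fixed_orientation
    (P Q : Finset (EuclideanSpace ℝ (Fin 2))) (hP : P.Nonempty) (hQ : Q.Nonempty)
    (hQP : Q ⊆ P)
    (u : EuclideanSpace ℝ (Fin 2)) (hu : ‖u‖ = 1)
    (m M wQ : ℝ)
    (hm : m = P.inf' hP fun p => (inner ℝ p u : ℝ))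
    (hM : M = P.sup' hP fun p => (inner ℝ p u : ℝ))
    (hw : wQ = Q.sup' hQ fun q =>
      min (M - (inner ℝ q u : ℝ)) ((inner ℝ q u : ℝ) - m)) :
    IsLeast {w : ℝ | 0 ≤ w ∧ ∃ c d : ℝ, c + w ≤ d - w ∧
        (∀ p ∈ P, c ≤ (inner ℝ p u : ℝ) ∧ (inner ℝ p u : ℝ) ≤ d) ∧
        ∀ q ∈ Q,
          (c ≤ (inner ℝ q u : ℝ) ∧ (inner ℝ q u : ℝ) ≤ c + w) ∨
          (d - w ≤ (inner ℝ q u : ℝ) ∧ (inner ℝ q u : ℝ) ≤ d)}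
      wQ :=
  minWidth_constrained_double_strip_fixed_orientation_general P Q hP hQ hQP u m M wQ hm hM hw
end

section
/- Let P ⊆ ℝ² be a finite set with at least 2 elements. For a unit vector u ∈ ℝ² put m(u) := min_{p∈P} ⟨p,u⟩, M(u) := max_{p∈P} ⟨p,u⟩, and w(u) := max_{p∈P} min(M(u) − ⟨p,u⟩, ⟨p,u⟩ − m(u)). Suppose u* is a unit vector with w(u*) ≤ w(u) for every unit vector u. Then at least one of the following holds: (a) the set {p ∈ P : ⟨p,u*⟩ = m(u*) or ⟨p,u*⟩ = M(u*)} has at least 3 elements (three points of P lie on the boundary of the minimum-width strip in direction u*); or (b) there exist two distinct points p₁, p₂ ∈ P with min(M(u*) − ⟨pᵢ,u*⟩, ⟨pᵢ,u*⟩ − m(u*)) = w(u*) for i = 1, 2 (two points of P lie on the boundary of the inner strip of the optimal double-strip). -/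
/-!
If neither alternative held, `P` would have a unique lowest point `a` and a unique highest point
`b` in direction `u*`, a unique point `c` of maximal depth, and positive width `w(u*)`. These
strict inequalities survive tilting `u*` to `u* + t v` with `v ⊥ u*` and `t` small, so near
`t = 0` the width is `min ⟪b - c, u* + t v⟫ ⟪c - a, u* + t v⟫`, a concave function of `t`: at
`t` or at `-t` it is at most `w(u*)`. Normalising `u* + t v` divides the width by
`‖u* + t v‖ > 1`, giving a unit vector of smaller width.
-/

open Module Filter Topology
open scoped RealInnerProductSpace

theorem exists_ne_zero_inner_eq_zero {E : Type*} [NormedAddCommGroup E] [InnerProductSpace ℝ E]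
    [FiniteDimensional ℝ E] (h : 1 < finrank ℝ E) (u : E) : ∃ v ≠ 0, ⟪u, v⟫ = 0 := by
  have hsum := (ℝ ∙ u).finrank_add_finrank_orthogonal
  have hspan : finrank ℝ (ℝ ∙ u) ≤ 1 := by simpa using finrank_span_le_card ({u} : Set E)
  obtain ⟨v, hv, hv0⟩ := Submodule.exists_mem_ne_zero_of_ne_bot
    (Submodule.one_le_finrank_iff.mp (by omega : 1 ≤ finrank ℝ (ℝ ∙ u)ᗮ))
  exact ⟨v, hv0, Submodule.mem_orthogonal_singleton_iff_inner_right.mp hv⟩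

theorem min_inner_add_min_inner_le {E : Type*} [NormedAddCommGroup E] [InnerProductSpace ℝ E]
    (x y u v : E) (t : ℝ) :
    min ⟪x, u + t • v⟫ ⟪y, u + t • v⟫ + min ⟪x, u + (-t) • v⟫ ⟪y, u + (-t) • v⟫ ≤
      2 * min ⟪x, u⟫ ⟪y, u⟫ := by
  refine min_add_min_le_min_add_add.trans_eq ?_
  simp only [inner_add_right, real_inner_smul_right]
  rw [mul_min_of_nonneg _ _ zero_le_two]
  congr 1 <;> ring

namespace Finset

variable {X ι α : Type*} [TopologicalSpace X] [LinearOrder α] [TopologicalSpace α]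
  [OrderClosedTopology α] {s : Finset ι} (hs : s.Nonempty) {f : X → ι → α} {x₀ : X} {i₀ : ι}

theorem eventually_sup'_eq_of_forall_lt (hi₀ : i₀ ∈ s) (hf : ∀ i ∈ s, ContinuousAt (f · i) x₀)
    (hlt : ∀ i ∈ s, i ≠ i₀ → f x₀ i < f x₀ i₀) : ∀ᶠ x in 𝓝 x₀, s.sup' hs (f x) = f x i₀ := by
  have hle : ∀ᶠ x in 𝓝 x₀, ∀ i ∈ s, f x i ≤ f x i₀ := (eventually_all_finset s).2 fun i hi => by
    rcases eq_or_ne i i₀ with rfl | hne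
    · exact .of_forall fun _ => le_rfl
    · exact ((hf i hi).eventually_lt (hf i₀ hi₀) (hlt i hi hne)).mono fun _ => le_of_lt
  filter_upwards [hle] with x hx
  exact le_antisymm (sup'_le _ _ hx) (le_sup' (f x) hi₀)

theorem eventually_inf'_eq_of_forall_lt (hi₀ : i₀ ∈ s) (hf : ∀ i ∈ s, ContinuousAt (f · i) x₀)
    (hlt : ∀ i ∈ s, i ≠ i₀ → f x₀ i₀ < f x₀ i) : ∀ᶠ x in 𝓝 x₀, s.inf' hs (f x) = f x i₀ := by
  have hle : ∀ᶠ x in 𝓝 x₀, ∀ i ∈ s, f x i₀ ≤ f x i := (eventually_all_finset s).2 fun i hi => by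
    rcases eq_or_ne i i₀ with rfl | hne
    · exact .of_forall fun _ => le_rfl
    · exact ((hf i₀ hi₀).eventually_lt (hf i hi) (hlt i hi hne)).mono fun _ => le_of_lt
  filter_upwards [hle] with x hx
  exact le_antisymm (inf'_le (f x) hi₀) (le_inf' _ _ hx)

end Finset

namespace DoubleStrip

variable {E : Type*} [NormedAddCommGroup E] [InnerProductSpace ℝ E] (P : Finset E)
  (hP : P.Nonempty)

def projMin (u : E) : ℝ := P.inf' hP fun p => ⟪p, u⟫

def projMax (u : E) : ℝ := P.sup' hP fun p => ⟪p, u⟫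

/-- For a unit vector `u`, the distance from `p` to the nearer line bounding the strip. -/
def depth (u p : E) : ℝ := min (projMax P hP u - ⟪p, u⟫) (⟪p, u⟫ - projMin P hP u)

def width (u : E) : ℝ := P.sup' hP (depth P hP u)

def boundary (u : E) : Set E :=
  {p | p ∈ P ∧ (⟪p, u⟫ = projMin P hP u ∨ ⟪p, u⟫ = projMax P hP u)}

variable {P hP} {u p : E}

theorem projMin_le (hp : p ∈ P) : projMin P hP u ≤ ⟪p, u⟫ := Finset.inf'_le _ hp

theorem le_projMax (hp : p ∈ P) : ⟪p, u⟫ ≤ projMax P hP u := Finset.le_sup' (fun p => ⟪p, u⟫) hp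

theorem depth_le_width (hp : p ∈ P) : depth P hP u p ≤ width P hP u := Finset.le_sup' _ hp

theorem depth_nonneg (hp : p ∈ P) : 0 ≤ depth P hP u p :=
  le_min (sub_nonneg.2 (le_projMax hp)) (sub_nonneg.2 (projMin_le hp))

theorem two_mul_depth_le (u p : E) : 2 * depth P hP u p ≤ projMax P hP u - projMin P hP u := by
  unfold depth
  linarith [min_le_left (projMax P hP u - ⟪p, u⟫) (⟪p, u⟫ - projMin P hP u),
    min_le_right (projMax P hP u - ⟪p, u⟫) (⟪p, u⟫ - projMin P hP u)]

theorem continuous_depth (p : E) : Continuous fun u => depth P hP u p := by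
  unfold depth projMax projMin
  fun_prop

theorem width_smul {c : ℝ} (hc : 0 < c) (u : E) : width P hP (c • u) = c * width P hP u := by
  have hmin : projMin P hP (c • u) = c * projMin P hP u := by
    simp only [projMin, real_inner_smul_right]
    exact (map_finset_inf' (OrderIso.mulLeft₀ c hc) hP _).symm
  have hmax : projMax P hP (c • u) = c * projMax P hP u := by
    simp only [projMax, real_inner_smul_right]
    exact (map_finset_sup' (OrderIso.mulLeft₀ c hc) hP _).symm
  have hdepth : depth P hP (c • u) = fun p => c * depth P hP u p := by
    ext p
    simp only [depth, hmin, hmax, real_inner_smul_right, ← mul_sub, mul_min_of_nonneg _ _ hc.le]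
  rw [width, hdepth, width, Finset.mul₀_sup' hc.le]

theorem width_pos (hcard : 2 ≤ P.card)
    (hunique : ∀ p ∈ P, ∀ q ∈ P, depth P hP u p = width P hP u → depth P hP u q = width P hP u →
      p = q) :
    0 < width P hP u := by
  by_contra! hw
  have hall : ∀ p ∈ P, depth P hP u p = width P hP u := fun p hp =>
    (depth_le_width hp).antisymm (hw.trans (depth_nonneg hp))
  obtain ⟨p, hp, q, hq, hpq⟩ := Finset.one_lt_card.mp hcard
  exact hpq (hunique p hp q hq (hall p hp) (hall q hq))

theorem projMin_lt_projMax (hw : 0 < width P hP u) : projMin P hP u < projMax P hP u := by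
  obtain ⟨c, -, hc⟩ := P.exists_mem_eq_sup' hP (depth P hP u)
  have hwc : width P hP u = depth P hP u c := hc
  linarith [two_mul_depth_le (hP := hP) u c]

theorem boundary_finite : (boundary P hP u).Finite := P.finite_toSet.subset fun _ hp => hp.1

theorem inner_lt_inner_of_projMin_eq (hbdry : (boundary P hP u).ncard ≤ 2)
    (hlt : projMin P hP u < projMax P hP u) {a : E} (ha : a ∈ P) (hau : projMin P hP u = ⟪a, u⟫)
    (hp : p ∈ P) (hpa : p ≠ a) : ⟪a, u⟫ < ⟪p, u⟫ := by
  refine hau ▸ (projMin_le hp).lt_of_ne fun hpu => ?_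
  obtain ⟨b, hb, hbu⟩ := P.exists_mem_eq_sup' hP (fun p => ⟪p, u⟫)
  have hthree : 2 < (boundary P hP u).ncard := (Set.two_lt_ncard_iff boundary_finite).2
    ⟨p, a, b, ⟨hp, .inl hpu.symm⟩, ⟨ha, .inl hau.symm⟩, ⟨hb, .inr hbu.symm⟩, hpa,
      fun h => hlt.ne (hpu.trans (h ▸ hbu).symm), fun h => hlt.ne (hau.trans (h ▸ hbu).symm)⟩
  omega

theorem inner_lt_inner_of_projMax_eq (hbdry : (boundary P hP u).ncard ≤ 2)
    (hlt : projMin P hP u < projMax P hP u) {b : E} (hb : b ∈ P) (hbu : projMax P hP u = ⟪b, u⟫)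
    (hp : p ∈ P) (hpb : p ≠ b) : ⟪p, u⟫ < ⟪b, u⟫ := by
  refine hbu ▸ (le_projMax hp).lt_of_ne fun hpu => ?_
  obtain ⟨a, ha, hau⟩ := P.exists_mem_eq_inf' hP (fun p => ⟪p, u⟫)
  have hthree : 2 < (boundary P hP u).ncard := (Set.two_lt_ncard_iff boundary_finite).2
    ⟨p, b, a, ⟨hp, .inr hpu⟩, ⟨hb, .inr hbu.symm⟩, ⟨ha, .inl hau.symm⟩, hpb,
      fun h => hlt.ne (hau.trans (h ▸ hpu)), fun h => hlt.ne (hau.trans (h ▸ hbu.symm))⟩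
  omega

theorem eventually_width_add_smul_eq {a b c : E} (ha : a ∈ P) (hb : b ∈ P) (hc : c ∈ P)
    (ha' : ∀ p ∈ P, p ≠ a → ⟪a, u⟫ < ⟪p, u⟫) (hb' : ∀ p ∈ P, p ≠ b → ⟪p, u⟫ < ⟪b, u⟫)
    (hc' : ∀ p ∈ P, p ≠ c → depth P hP u p < depth P hP u c) (v : E) :
    ∀ᶠ t in 𝓝 (0 : ℝ),
      width P hP (u + t • v) = min ⟪b - c, u + t • v⟫ ⟪c - a, u + t • v⟫ := by
  have hline : Continuous fun t : ℝ => u + t • v := by fun_prop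
  have hmin : ∀ᶠ t in 𝓝 (0 : ℝ), projMin P hP (u + t • v) = ⟪a, u + t • v⟫ :=
    Finset.eventually_inf'_eq_of_forall_lt hP ha (fun _ _ => by fun_prop) (by simpa using ha')
  have hmax : ∀ᶠ t in 𝓝 (0 : ℝ), projMax P hP (u + t • v) = ⟪b, u + t • v⟫ :=
    Finset.eventually_sup'_eq_of_forall_lt hP hb (fun _ _ => by fun_prop) (by simpa using hb')
  have hwidth : ∀ᶠ t in 𝓝 (0 : ℝ), width P hP (u + t • v) = depth P hP (u + t • v) c :=
    Finset.eventually_sup'_eq_of_forall_lt hP hc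
      (fun p _ => ((continuous_depth p).comp hline).continuousAt) (by simpa using hc')
  filter_upwards [hmin, hmax, hwidth] with t h₁ h₂ h₃
  rw [h₃, depth, h₁, h₂, inner_sub_left, inner_sub_left]

theorem exists_ne_zero_width_add_smul_le {a b c : E} (ha : a ∈ P) (hb : b ∈ P) (hc : c ∈ P)
    (ha' : ∀ p ∈ P, p ≠ a → ⟪a, u⟫ < ⟪p, u⟫) (hb' : ∀ p ∈ P, p ≠ b → ⟪p, u⟫ < ⟪b, u⟫)
    (hc' : ∀ p ∈ P, p ≠ c → depth P hP u p < depth P hP u c) (v : E) :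
    ∃ t : ℝ, t ≠ 0 ∧ width P hP (u + t • v) ≤ width P hP u := by
  have h := eventually_width_add_smul_eq ha hb hc ha' hb' hc' v
  have h₀ : width P hP u = min ⟪b - c, u⟫ ⟪c - a, u⟫ := by simpa using h.self_of_nhds
  have hneg := (continuous_neg.tendsto' (0 : ℝ) 0 neg_zero).eventually h
  obtain ⟨t, ⟨hplus, hminus⟩, ht⟩ :=
    (((h.and hneg).filter_mono (nhdsWithin_le_nhds (s := {0}ᶜ))).and self_mem_nhdsWithin).exists
  have hsum := min_inner_add_min_inner_le (b - c) (c - a) u v t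
  rw [← hplus, ← hminus, ← h₀] at hsum
  by_cases hle : width P hP (u + t • v) ≤ width P hP u
  · exact ⟨t, ht, hle⟩
  · exact ⟨-t, neg_ne_zero.2 ht, by linarith⟩

theorem exists_unit_width_lt_of_width_add_smul_le (hu : ‖u‖ = 1) {v : E} (hv : v ≠ 0)
    (huv : ⟪u, v⟫ = 0) {t : ℝ} (ht : t ≠ 0) (hw : 0 < width P hP u)
    (hle : width P hP (u + t • v) ≤ width P hP u) :
    ∃ u' : E, ‖u'‖ = 1 ∧ width P hP u' < width P hP u := by
  set z := u + t • v
  have hz : 1 < ‖z‖ := by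
    have hpyth := norm_add_sq_eq_norm_sq_add_norm_sq_real (x := u) (y := t • v)
      (by rw [real_inner_smul_right, huv, mul_zero])
    have htv : 0 < ‖t • v‖ := norm_pos_iff.2 (smul_ne_zero ht hv)
    nlinarith [norm_nonneg z]
  refine ⟨‖z‖⁻¹ • z, norm_smul_inv_norm (norm_pos_iff.1 (one_pos.trans hz)), ?_⟩
  rw [width_smul (inv_pos.2 (one_pos.trans hz))]
  calc ‖z‖⁻¹ * width P hP z ≤ ‖z‖⁻¹ * width P hP u := by gcongr
    _ < width P hP u := mul_lt_of_lt_one_left hw (inv_lt_one_of_one_lt₀ hz)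

theorem exists_unit_width_lt (hcard : 2 ≤ P.card) (hu : ‖u‖ = 1) {v : E} (hv : v ≠ 0)
    (huv : ⟪u, v⟫ = 0) (hbdry : (boundary P hP u).ncard ≤ 2)
    (hunique : ∀ p ∈ P, ∀ q ∈ P, depth P hP u p = width P hP u → depth P hP u q = width P hP u →
      p = q) :
    ∃ u' : E, ‖u'‖ = 1 ∧ width P hP u' < width P hP u := by
  have hw := width_pos hcard hunique
  have hlt := projMin_lt_projMax hw
  obtain ⟨a, ha, hau⟩ : ∃ a ∈ P, projMin P hP u = ⟪a, u⟫ := P.exists_mem_eq_inf' hP _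
  obtain ⟨b, hb, hbu⟩ : ∃ b ∈ P, projMax P hP u = ⟪b, u⟫ := P.exists_mem_eq_sup' hP _
  obtain ⟨c, hc, hcw⟩ : ∃ c ∈ P, width P hP u = depth P hP u c := P.exists_mem_eq_sup' hP _
  have hc' : ∀ p ∈ P, p ≠ c → depth P hP u p < depth P hP u c := fun p hp hpc =>
    ((depth_le_width hp).trans_eq hcw).lt_of_ne fun h =>
      hpc (hunique p hp c hc (h.trans hcw.symm) hcw.symm)
  obtain ⟨t, ht, hle⟩ := exists_ne_zero_width_add_smul_le ha hb hc
    (fun _ hp hpa => inner_lt_inner_of_projMin_eq hbdry hlt ha hau hp hpa)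
    (fun _ hp hpb => inner_lt_inner_of_projMax_eq hbdry hlt hb hbu hp hpb) hc' v
  exact exists_unit_width_lt_of_width_add_smul_le hu hv huv ht hw hle

end DoubleStrip

/-- Structure of an optimal double-strip (Lemma 2 of the paper): if the unit
vector `u*` minimizes the width `w(u) = max_{p∈P} min (M(u) - ⟪p,u⟫) (⟪p,u⟫ - m(u))`
of a double-strip with normal `u` enclosing a finite set `P` with `|P| ≥ 2`, then
either three points of `P` lie on the boundary of the minimum-width strip in
direction `u*`, or two points of `P` attain the width `w(u*)` (lie on the
boundary of the inner strip). -/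
theorem optimal_double_strip_configuration
    (P : Finset (EuclideanSpace ℝ (Fin 2))) (hP : P.Nonempty) (hcard : 2 ≤ P.card)
    (m M w : EuclideanSpace ℝ (Fin 2) → ℝ)
    (hm : ∀ u, m u = P.inf' hP fun p => (inner ℝ p u : ℝ))
    (hM : ∀ u, M u = P.sup' hP fun p => (inner ℝ p u : ℝ))
    (hw : ∀ u, w u = P.sup' hP fun p =>
      min (M u - (inner ℝ p u : ℝ)) ((inner ℝ p u : ℝ) - m u))
    (ustar : EuclideanSpace ℝ (Fin 2)) (hustar : ‖ustar‖ = 1)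
    (hopt : ∀ u : EuclideanSpace ℝ (Fin 2), ‖u‖ = 1 → w ustar ≤ w u) :
    3 ≤ {p : EuclideanSpace ℝ (Fin 2) | p ∈ P ∧
        ((inner ℝ p ustar : ℝ) = m ustar ∨ (inner ℝ p ustar : ℝ) = M ustar)}.ncard ∨
    ∃ p₁ ∈ P, ∃ p₂ ∈ P, p₁ ≠ p₂ ∧
      min (M ustar - (inner ℝ p₁ ustar : ℝ)) ((inner ℝ p₁ ustar : ℝ) - m ustar) = w ustar ∧
      min (M ustar - (inner ℝ p₂ ustar : ℝ)) ((inner ℝ p₂ ustar : ℝ) - m ustar) = w ustar := by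
  obtain rfl : m = DoubleStrip.projMin P hP := funext hm
  obtain rfl : M = DoubleStrip.projMax P hP := funext hM
  obtain rfl : w = DoubleStrip.width P hP := funext hw
  by_contra! hcon
  obtain ⟨hbdry, hattain⟩ := hcon
  obtain ⟨v, hv, huv⟩ := exists_ne_zero_inner_eq_zero (by simp) ustar
  obtain ⟨u, hu, hlt⟩ := DoubleStrip.exists_unit_width_lt hcard hustar hv huv
    (Nat.le_of_lt_succ hbdry) fun p hp q hq hpw hqw => by_contra fun hpq =>
      hattain p hp q hq hpq hpw hqw
  exact (hopt u hu).not_gt hlt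
end

section
/- Let P ⊆ ℝ² be a finite set and Q ⊆ P a subset with at least 2 elements. For a unit vector u ∈ ℝ² put m(u) := min_{p∈P} ⟨p,u⟩, M(u) := max_{p∈P} ⟨p,u⟩, and w_Q(u) := max_{q∈Q} min(M(u) − ⟨q,u⟩, ⟨q,u⟩ − m(u)). Suppose u* is a unit vector with w_Q(u*) ≤ w_Q(u) for every unit vector u. Then at least one of the following holds: (a) the set {p ∈ P : ⟨p,u*⟩ = m(u*) or ⟨p,u*⟩ = M(u*)} has at least 3 elements; or (b) there exist two distinct points q₁, q₂ ∈ Q with min(M(u*) − ⟨qᵢ,u*⟩, ⟨qᵢ,u*⟩ − m(u*)) = w_Q(u*) for i = 1, 2. -/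
/-!
Suppose neither alternative holds and let `w = w_Q(u*)`. Then `w > 0` (otherwise every point of
`Q` attains it), a single point `q₀ ∈ Q` attains `w`, and each boundary line of the outer strip
carries exactly one point of `P`. These two extreme points stay extreme for all `u` near `u*`, so
near `u*` the depth of `q₀` is bounded by a linear function `⟪a, u⟫` equal to `w > 0` at `u*`,
while the other points of `Q` keep depth `< w`. A linear function positive at `u*` is not locally
minimal at `u*` on the unit circle, so a slight rotation of `u*` gives `w_Q(u) < w_Q(u*)`.
-/

open Filter Topology Real RealInnerProductSpace

theorem Real.frequently_cos_mul_add_sin_mul_lt {w : ℝ} (hw : 0 < w) (c : ℝ) :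
    ∃ᶠ θ in 𝓝 0, cos θ * w + sin θ * c < w := by
  suffices key : ∀ c ≤ 0, ∃ᶠ θ in 𝓝 0, cos θ * w + sin θ * c < w by
    obtain hc | hc := le_or_gt c 0
    · exact key c hc
    · have hneg : Tendsto (fun θ : ℝ => -θ) (𝓝 0) (𝓝 0) := by
        simpa using (continuous_neg (G := ℝ)).tendsto 0
      refine hneg.frequently ((key (-c) (by linarith)).mono fun θ hθ => ?_)
      simpa [cos_neg, sin_neg] using hθ
  intro c hc
  have hpos : ∀ᶠ θ in 𝓝[>] 0, θ ∈ Set.Ioo 0 π := Ioo_mem_nhdsGT pi_pos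
  refine (hpos.frequently.mono fun θ hθ => ?_).filter_mono nhdsWithin_le_nhds
  have hsin : 0 < sin θ := sin_pos_of_pos_of_lt_pi hθ.1 hθ.2
  have hcos : cos θ < 1 := by nlinarith [sin_sq_add_cos_sq θ, cos_le_one θ]
  nlinarith

section
variable {E : Type*} [NormedAddCommGroup E] [InnerProductSpace ℝ E]

theorem norm_cos_smul_add_sin_smul {u v : E} (hu : ‖u‖ = 1) (hv : ‖v‖ = 1) (huv : ⟪u, v⟫ = 0)
    (θ : ℝ) : ‖cos θ • u + sin θ • v‖ = 1 := by
  have h := norm_add_sq_eq_norm_sq_add_norm_sq_real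
    (by simp [real_inner_smul_left, real_inner_smul_right, huv] : ⟪cos θ • u, sin θ • v⟫ = 0)
  simp only [norm_smul, hu, hv, mul_one, norm_eq_abs, ← sq, sq_abs, cos_sq_add_sin_sq] at h
  exact (pow_eq_one_iff_of_nonneg (norm_nonneg _) two_ne_zero).1 h

theorem frequently_norm_eq_one_inner_lt {u v a : E} (hu : ‖u‖ = 1) (hv : ‖v‖ = 1)
    (huv : ⟪u, v⟫ = 0) (ha : 0 < ⟪a, u⟫) :
    ∃ᶠ x in 𝓝 u, ‖x‖ = 1 ∧ ⟪a, x⟫ < ⟪a, u⟫ := by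
  have hγ : Tendsto (fun θ : ℝ => cos θ • u + sin θ • v) (𝓝 0) (𝓝 u) := by
    have hc : Continuous fun θ : ℝ => cos θ • u + sin θ • v := by fun_prop
    simpa using hc.tendsto 0
  refine hγ.frequently ((frequently_cos_mul_add_sin_mul_lt ha ⟪a, v⟫).mono fun θ hθ => ?_)
  refine ⟨norm_cos_smul_add_sin_smul hu hv huv θ, ?_⟩
  rwa [inner_add_right, real_inner_smul_right, real_inner_smul_right]

end

theorem EuclideanSpace.exists_norm_eq_inner_eq_zero (u : EuclideanSpace ℝ (Fin 2)) :
    ∃ v : EuclideanSpace ℝ (Fin 2), ‖v‖ = ‖u‖ ∧ ⟪u, v⟫ = 0 := by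
  let o : Orientation ℝ (EuclideanSpace ℝ (Fin 2)) (Fin 2) :=
    (EuclideanSpace.basisFun (Fin 2) ℝ).toBasis.orientation
  exact ⟨o.rightAngleRotation u, o.rightAngleRotation.norm_map u,
    by rw [real_inner_comm]; exact o.inner_rightAngleRotation_self u⟩

theorem Finset.exists_forall_ne_lt_sup' {ι α : Type*} [LinearOrder α] {s : Finset ι}
    (hs : s.Nonempty) {f : ι → α}
    (h : ∀ i ∈ s, ∀ j ∈ s, i ≠ j → f i = s.sup' hs f → f j ≠ s.sup' hs f) :
    ∃ i₀ ∈ s, f i₀ = s.sup' hs f ∧ ∀ i ∈ s, i ≠ i₀ → f i < s.sup' hs f := by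
  obtain ⟨i₀, hi₀, hmax⟩ := s.exists_mem_eq_sup' hs f
  exact ⟨i₀, hi₀, hmax.symm, fun i hi hne =>
    (s.le_sup' f hi).lt_of_ne (h i₀ hi₀ i hi hne.symm hmax.symm)⟩

theorem Finset.eventually_forall_le_of_forall_ne_lt {X ι α : Type*} [TopologicalSpace X]
    [LinearOrder α] [TopologicalSpace α] [OrderClosedTopology α] {s : Finset ι}
    {f : ι → X → α} {x₀ : X} {i₀ : ι} (hf : ∀ i, ContinuousAt (f i) x₀)
    (h : ∀ i ∈ s, i ≠ i₀ → f i x₀ < f i₀ x₀) :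
    ∀ᶠ x in 𝓝 x₀, ∀ i ∈ s, f i x ≤ f i₀ x := by
  refine (eventually_all_finset s).2 fun i hi => ?_
  obtain rfl | hne := eq_or_ne i i₀
  · exact Eventually.of_forall fun _ => le_rfl
  · exact ((hf i).eventually_lt (hf i₀) (h i hi hne)).mono fun _ => le_of_lt

theorem Set.eq_or_eq_of_ncard_lt_three {α : Type*} {s : Set α} (hs : s.Finite) (h : s.ncard < 3)
    {a b c : α} (ha : a ∈ s) (hb : b ∈ s) (hc : c ∈ s) (hab : a ≠ b) : c = a ∨ c = b := by
  by_contra! hne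
  exact h.not_ge ((Set.two_lt_ncard_iff hs).2 ⟨a, b, c, ha, hb, hc, hab, hne.1.symm, hne.2.symm⟩)

namespace Finset

variable {E : Type*} [NormedAddCommGroup E] [InnerProductSpace ℝ E] (P : Finset E)
  (hP : P.Nonempty)

noncomputable def maxInner (u : E) : ℝ := P.sup' hP fun p => ⟪p, u⟫

noncomputable def minInner (u : E) : ℝ := P.inf' hP fun p => ⟪p, u⟫

/-- With `M(u) = P.maxInner hP u` and `m(u) = P.minInner hP u`: for a unit vector `u`, the
distance from `q` to the nearer boundary line of the outer strip, so that
`w_Q(u) = Q.sup' hQ (P.stripDepth hP u)`. -/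
noncomputable def stripDepth (u q : E) : ℝ :=
  min (P.maxInner hP u - ⟪q, u⟫) (⟪q, u⟫ - P.minInner hP u)

variable {P}

theorem inner_le_maxInner {p : E} (hp : p ∈ P) (u : E) : ⟪p, u⟫ ≤ P.maxInner hP u :=
  P.le_sup' (fun p => ⟪p, u⟫) hp

theorem minInner_le_inner {p : E} (hp : p ∈ P) (u : E) : P.minInner hP u ≤ ⟪p, u⟫ :=
  P.inf'_le (fun p => ⟪p, u⟫) hp

theorem stripDepth_nonneg {q : E} (hq : q ∈ P) (u : E) : 0 ≤ P.stripDepth hP u q :=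
  le_min (sub_nonneg.2 (inner_le_maxInner hP hq u)) (sub_nonneg.2 (minInner_le_inner hP hq u))

theorem two_mul_stripDepth_le (u q : E) :
    2 * P.stripDepth hP u q ≤ P.maxInner hP u - P.minInner hP u := by
  have := min_le_left (P.maxInner hP u - ⟪q, u⟫) (⟪q, u⟫ - P.minInner hP u)
  have := min_le_right (P.maxInner hP u - ⟪q, u⟫) (⟪q, u⟫ - P.minInner hP u)
  unfold stripDepth
  linarith

theorem continuous_stripDepth (q : E) : Continuous fun u => P.stripDepth hP u q := by
  have hM : Continuous (P.maxInner hP) :=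
    Continuous.finset_sup'_apply hP fun _ _ => continuous_const.inner continuous_id
  have hm : Continuous (P.minInner hP) :=
    Continuous.finset_inf'_apply hP fun _ _ => continuous_const.inner continuous_id
  unfold stripDepth
  fun_prop

theorem eventually_maxInner_le {p₀ u₀ : E} (h : ∀ p ∈ P, p ≠ p₀ → ⟪p, u₀⟫ < ⟪p₀, u₀⟫) :
    ∀ᶠ u in 𝓝 u₀, P.maxInner hP u ≤ ⟪p₀, u⟫ :=
  (eventually_forall_le_of_forall_ne_lt
    (fun _ => (continuous_const.inner continuous_id).continuousAt) h).mono
      fun _ hu => P.sup'_le hP _ hu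

theorem eventually_le_minInner {p₀ u₀ : E} (h : ∀ p ∈ P, p ≠ p₀ → ⟪p₀, u₀⟫ < ⟪p, u₀⟫) :
    ∀ᶠ u in 𝓝 u₀, ⟪p₀, u⟫ ≤ P.minInner hP u :=
  (eventually_forall_le_of_forall_ne_lt (f := fun p u => OrderDual.toDual ⟪p, u⟫)
    (fun _ => (continuous_toDual.comp (continuous_const.inner continuous_id)).continuousAt) h).mono
    fun _ hu => P.le_inf' hP _ hu

theorem exists_strict_extreme_points_of_ncard_lt_three {u₀ : E}
    (hmM : P.minInner hP u₀ < P.maxInner hP u₀)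
    (hB : {p | p ∈ P ∧ (⟪p, u₀⟫ = P.minInner hP u₀ ∨ ⟪p, u₀⟫ = P.maxInner hP u₀)}.ncard < 3) :
    ∃ pmin pmax, ⟪pmin, u₀⟫ = P.minInner hP u₀ ∧ ⟪pmax, u₀⟫ = P.maxInner hP u₀ ∧
      (∀ p ∈ P, p ≠ pmin → ⟪pmin, u₀⟫ < ⟪p, u₀⟫) ∧
      (∀ p ∈ P, p ≠ pmax → ⟪p, u₀⟫ < ⟪pmax, u₀⟫) := by
  obtain ⟨pmin, hpmin, hmin⟩ := P.exists_mem_eq_inf' hP fun p => ⟪p, u₀⟫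
  obtain ⟨pmax, hpmax, hmax⟩ := P.exists_mem_eq_sup' hP fun p => ⟪p, u₀⟫
  change P.minInner hP u₀ = ⟪pmin, u₀⟫ at hmin
  change P.maxInner hP u₀ = ⟪pmax, u₀⟫ at hmax
  have hfin : {p | p ∈ P ∧ (⟪p, u₀⟫ = P.minInner hP u₀ ∨ ⟪p, u₀⟫ = P.maxInner hP u₀)}.Finite :=
    P.finite_toSet.subset fun _ hp => hp.1
  have hne : pmin ≠ pmax := by rintro rfl; exact hmM.ne (hmin.trans hmax.symm)
  have hboundary := fun {p} (hp : p ∈ P) (hpB) =>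
    Set.eq_or_eq_of_ncard_lt_three hfin hB ⟨hpmin, Or.inl hmin.symm⟩ ⟨hpmax, Or.inr hmax.symm⟩
      (c := p) ⟨hp, hpB⟩ hne
  refine ⟨pmin, pmax, hmin.symm, hmax.symm, fun p hp hp' => ?_, fun p hp hp' => ?_⟩
  · refine (hmin ▸ minInner_le_inner hP hp u₀).lt_of_ne fun h => ?_
    rcases hboundary hp (Or.inl (h.symm.trans hmin.symm)) with rfl | rfl
    · exact hp' rfl
    · exact hmM.ne (hmin.trans (h.trans hmax.symm))
  · refine (hmax ▸ inner_le_maxInner hP hp u₀).lt_of_ne fun h => ?_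
    rcases hboundary hp (Or.inr (h.trans hmax.symm)) with rfl | rfl
    · exact hmM.ne (hmin.trans (h.trans hmax.symm))
    · exact hp' rfl

theorem exists_eventually_stripDepth_le_inner {u₀ : E} (q : E)
    (hmM : P.minInner hP u₀ < P.maxInner hP u₀)
    (hB : {p | p ∈ P ∧ (⟪p, u₀⟫ = P.minInner hP u₀ ∨ ⟪p, u₀⟫ = P.maxInner hP u₀)}.ncard < 3) :
    ∃ a, ⟪a, u₀⟫ = P.stripDepth hP u₀ q ∧ ∀ᶠ u in 𝓝 u₀, P.stripDepth hP u q ≤ ⟪a, u⟫ := by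
  obtain ⟨pmin, pmax, hmin, hmax, hpmin, hpmax⟩ :=
    exists_strict_extreme_points_of_ncard_lt_three hP hmM hB
  rcases min_choice (P.maxInner hP u₀ - ⟪q, u₀⟫) (⟪q, u₀⟫ - P.minInner hP u₀) with h | h
  · refine ⟨pmax - q, by rw [stripDepth, h, inner_sub_left, hmax], ?_⟩
    filter_upwards [eventually_maxInner_le hP hpmax] with u hu
    rw [inner_sub_left]
    exact (min_le_left _ _).trans (by linarith)
  · refine ⟨q - pmin, by rw [stripDepth, h, inner_sub_left, hmin], ?_⟩
    filter_upwards [eventually_le_minInner hP hpmin] with u hu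
    rw [inner_sub_left]
    exact (min_le_right _ _).trans (by linarith)

end Finset

/-- Structure of an optimal `P`-constrained double-strip (Lemma 4 of the paper):
if the unit vector `u*` minimizes
`w_Q(u) = max_{q∈Q} min (M(u) - ⟪q,u⟫) (⟪q,u⟫ - m(u))`, the width of a
`P`-constrained double-strip with normal `u` enclosing `Q ⊆ P` with `|Q| ≥ 2`,
then either three points of `P` lie on the boundary of the minimum-width strip
enclosing `P` in direction `u*`, or two points of `Q` attain the width
`w_Q(u*)`. -/
theorem optimal_constrained_double_strip_configuration
    (P Q : Finset (EuclideanSpace ℝ (Fin 2))) (hP : P.Nonempty)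
    (hQ : Q.Nonempty) (hQP : Q ⊆ P) (hcard : 2 ≤ Q.card)
    (m M wQ : EuclideanSpace ℝ (Fin 2) → ℝ)
    (hm : ∀ u, m u = P.inf' hP fun p => (inner ℝ p u : ℝ))
    (hM : ∀ u, M u = P.sup' hP fun p => (inner ℝ p u : ℝ))
    (hw : ∀ u, wQ u = Q.sup' hQ fun q =>
      min (M u - (inner ℝ q u : ℝ)) ((inner ℝ q u : ℝ) - m u))
    (ustar : EuclideanSpace ℝ (Fin 2)) (hustar : ‖ustar‖ = 1)
    (hopt : ∀ u : EuclideanSpace ℝ (Fin 2), ‖u‖ = 1 → wQ ustar ≤ wQ u) :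
    3 ≤ {p : EuclideanSpace ℝ (Fin 2) | p ∈ P ∧
        ((inner ℝ p ustar : ℝ) = m ustar ∨ (inner ℝ p ustar : ℝ) = M ustar)}.ncard ∨
    ∃ q₁ ∈ Q, ∃ q₂ ∈ Q, q₁ ≠ q₂ ∧
      min (M ustar - (inner ℝ q₁ ustar : ℝ)) ((inner ℝ q₁ ustar : ℝ) - m ustar) = wQ ustar ∧
      min (M ustar - (inner ℝ q₂ ustar : ℝ)) ((inner ℝ q₂ ustar : ℝ) - m ustar) = wQ ustar := by
  obtain rfl : m = P.minInner hP := funext hm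
  obtain rfl : M = P.maxInner hP := funext hM
  obtain rfl : wQ = fun u => Q.sup' hQ (P.stripDepth hP u) := funext hw
  by_contra! h
  obtain ⟨hthree, hnottwo⟩ := h
  obtain ⟨q₀, -, hq₀w, hlt⟩ :=
    Q.exists_forall_ne_lt_sup' hQ (f := P.stripDepth hP ustar) hnottwo
  set w := Q.sup' hQ (P.stripDepth hP ustar)
  obtain ⟨q, hq, hqq₀⟩ := Q.exists_mem_ne hcard q₀
  have hwpos : 0 < w := (Finset.stripDepth_nonneg hP (hQP hq) ustar).trans_lt (hlt q hq hqq₀)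
  have hmM : P.minInner hP ustar < P.maxInner hP ustar := by
    linarith [Finset.two_mul_stripDepth_le hP ustar q₀]
  obtain ⟨a, ha, hq₀a⟩ := Finset.exists_eventually_stripDepth_le_inner hP q₀ hmM hthree
  have haw : ⟪a, ustar⟫ = w := ha.trans hq₀w
  have hothers : ∀ᶠ u in 𝓝 ustar, ∀ q ∈ Q.erase q₀, P.stripDepth hP u q < w :=
    (eventually_all_finset _).2 fun q hq =>
      (Finset.continuous_stripDepth hP q).continuousAt.eventually_lt continuousAt_const
        (hlt q (Finset.mem_of_mem_erase hq) (Finset.ne_of_mem_erase hq))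
  obtain ⟨v, hv, huv⟩ := EuclideanSpace.exists_norm_eq_inner_eq_zero ustar
  obtain ⟨u, ⟨hu, hau⟩, hq₀u, hothersu⟩ :=
    ((frequently_norm_eq_one_inner_lt hustar (hv.trans hustar) huv (haw ▸ hwpos)).and_eventually
      (hq₀a.and hothers)).exists
  refine (hopt u hu).not_gt ((Q.sup'_lt_iff hQ).2 fun q hq => ?_)
  obtain rfl | hne := eq_or_ne q q₀
  · exact hq₀u.trans_lt (hau.trans_eq haw)
  · exact hothersu q (Finset.mem_erase.2 ⟨hne, hq⟩)
end

section
/- Let P ⊆ ℝ² be a finite nonempty set and let u, v ∈ ℝ² be linearly independent unit vectors. Put m_u := min_{p∈P} ⟨p,u⟩, M_u := max_{p∈P} ⟨p,u⟩, m_v := min_{p∈P} ⟨p,v⟩, M_v := max_{p∈P} ⟨p,v⟩, and for p ∈ P set d_p^u := min(M_u − ⟨p,u⟩, ⟨p,u⟩ − m_u) and d_p^v := min(M_v − ⟨p,v⟩, ⟨p,v⟩ − m_v). Then w* := max_{p∈P} min(d_p^u, d_p^v) is the least element of the set of all w ≥ 0 for which there exist reals c₁, d₁, c₂, d₂ with c₁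 + w ≤ d₁ − w and c₂ + w ≤ d₂ − w such that every p ∈ P satisfies c₁ ≤ ⟨p,u⟩ ≤ d₁ and c₂ ≤ ⟨p,v⟩ ≤ d₂, and additionally ⟨p,u⟩ ≤ c₁ + w, or ⟨p,u⟩ ≥ d₁ − w, or ⟨p,v⟩ ≤ c₂ + w, or ⟨p,v⟩ ≥ d₂ − w. In other words, w* is the minimum width of a parallelogram annulus with side normals u and v enclosing P, and it is attained by the annulus whose outer parallelogram is the intersection of the two minimum-width strips enclosing P with normals u and v. -/
/-!
Only the two linear functionals `⟨·, u⟩` and `⟨·, v⟩` matter. Any strip `c ≤ f ≤ d` enclosing `P`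
contains the range `[min f, max f]`, so a point lying within `w` of one of its edges lies within `w`
of the corresponding end of that range. Hence a point's distance to the nearer end of the range
of `f` or of `g` is a lower bound for any enclosing annulus width, and the annulus built on the two
ranges themselves, with width the largest of these distances, encloses `P`.
-/

namespace ParallelogramAnnulus

variable {α : Type*}

/-- For `f = ⟨·, u⟩` this is `d_p^u` of the statement. -/
noncomputable def rangeDepth (s : Finset α) (hs : s.Nonempty) (f : α → ℝ) (x : α) : ℝ :=
  min (s.sup' hs f - f x) (f x - s.inf' hs f)

def annulusWidths (s : Finset α) (f g : α → ℝ) : Set ℝ :=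
  {w : ℝ | 0 ≤ w ∧ ∃ c₁ d₁ c₂ d₂ : ℝ,
    c₁ + w ≤ d₁ - w ∧ c₂ + w ≤ d₂ - w ∧ ∀ p ∈ s,
      (c₁ ≤ f p ∧ f p ≤ d₁) ∧ (c₂ ≤ g p ∧ g p ≤ d₂) ∧
      (f p ≤ c₁ + w ∨ d₁ - w ≤ f p ∨ g p ≤ c₂ + w ∨ d₂ - w ≤ g p)}

section rangeDepth

variable {s : Finset α} (hs : s.Nonempty) (f : α → ℝ) {x : α}

lemma rangeDepth_nonneg (hx : x ∈ s) : 0 ≤ rangeDepth s hs f x :=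
  le_min (sub_nonneg.2 (s.le_sup' f hx)) (sub_nonneg.2 (s.inf'_le f hx))

lemma rangeDepth_le_half (x : α) : rangeDepth s hs f x ≤ (s.sup' hs f - s.inf' hs f) / 2 := by
  have := min_le_left (s.sup' hs f - f x) (f x - s.inf' hs f)
  have := min_le_right (s.sup' hs f - f x) (f x - s.inf' hs f)
  unfold rangeDepth
  linarith

lemma rangeDepth_le_of_le_add {c w : ℝ} (hc : ∀ y ∈ s, c ≤ f y) (h : f x ≤ c + w) :
    rangeDepth s hs f x ≤ w := by
  have := s.le_inf' hs f hc
  exact min_le_of_right_le (by linarith)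

lemma rangeDepth_le_of_sub_le {d w : ℝ} (hd : ∀ y ∈ s, f y ≤ d) (h : d - w ≤ f x) :
    rangeDepth s hs f x ≤ w := by
  have := s.sup'_le hs f hd
  exact min_le_of_left_le (by linarith)

lemma le_inf'_add_or_sub_le_of_rangeDepth_le {w : ℝ} (h : rangeDepth s hs f x ≤ w) :
    f x ≤ s.inf' hs f + w ∨ s.sup' hs f - w ≤ f x := by
  rcases min_le_iff.1 h with h | h
  · exact Or.inr (by linarith)
  · exact Or.inl (by linarith)

end rangeDepth

section annulusWidths

variable {s : Finset α} (hs : s.Nonempty) (f g : α → ℝ)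

noncomputable def depthWidth : ℝ :=
  s.sup' hs fun x => min (rangeDepth s hs f x) (rangeDepth s hs g x)

lemma depthWidth_mem_annulusWidths : depthWidth hs f g ∈ annulusWidths s f g := by
  have hle : ∀ x ∈ s, min (rangeDepth s hs f x) (rangeDepth s hs g x) ≤ depthWidth hs f g :=
    fun x hx => s.le_sup' (fun x => min (rangeDepth s hs f x) (rangeDepth s hs g x)) hx
  have hf : depthWidth hs f g ≤ (s.sup' hs f - s.inf' hs f) / 2 :=
    s.sup'_le _ _ fun x _ => min_le_of_left_le (rangeDepth_le_half hs f x)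
  have hg : depthWidth hs f g ≤ (s.sup' hs g - s.inf' hs g) / 2 :=
    s.sup'_le _ _ fun x _ => min_le_of_right_le (rangeDepth_le_half hs g x)
  obtain ⟨x₀, hx₀⟩ := id hs
  refine ⟨(le_min (rangeDepth_nonneg hs f hx₀) (rangeDepth_nonneg hs g hx₀)).trans (hle x₀ hx₀),
    s.inf' hs f, s.sup' hs f, s.inf' hs g, s.sup' hs g, by linarith, by linarith,
    fun x hx => ⟨⟨s.inf'_le f hx, s.le_sup' f hx⟩, ⟨s.inf'_le g hx, s.le_sup' g hx⟩, ?_⟩⟩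
  rcases min_le_iff.1 (hle x hx) with h | h
  · rcases le_inf'_add_or_sub_le_of_rangeDepth_le hs f h with h | h <;> simp [h]
  · rcases le_inf'_add_or_sub_le_of_rangeDepth_le hs g h with h | h <;> simp [h]

lemma depthWidth_mem_lowerBounds : depthWidth hs f g ∈ lowerBounds (annulusWidths s f g) := by
  rintro w ⟨-, c₁, d₁, c₂, d₂, -, -, hall⟩
  refine s.sup'_le _ _ fun x hx => ?_
  have hc₁ : ∀ y ∈ s, c₁ ≤ f y := fun y hy => (hall y hy).1.1
  have hd₁ : ∀ y ∈ s, f y ≤ d₁ := fun y hy => (hall y hy).1.2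
  have hc₂ : ∀ y ∈ s, c₂ ≤ g y := fun y hy => (hall y hy).2.1.1
  have hd₂ : ∀ y ∈ s, g y ≤ d₂ := fun y hy => (hall y hy).2.1.2
  rcases (hall x hx).2.2 with h | h | h | h
  · exact min_le_of_left_le (rangeDepth_le_of_le_add hs f hc₁ h)
  · exact min_le_of_left_le (rangeDepth_le_of_sub_le hs f hd₁ h)
  · exact min_le_of_right_le (rangeDepth_le_of_le_add hs g hc₂ h)
  · exact min_le_of_right_le (rangeDepth_le_of_sub_le hs g hd₂ h)

theorem isLeast_annulusWidths_depthWidth : IsLeast (annulusWidths s f g) (depthWidth hs f g) :=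
  ⟨depthWidth_mem_annulusWidths hs f g, depthWidth_mem_lowerBounds hs f g⟩

end annulusWidths

end ParallelogramAnnulus

open ParallelogramAnnulus in
theorem minWidth_parallelogram_annulus_fixed_orientations_general
    (P : Finset (EuclideanSpace ℝ (Fin 2))) (hP : P.Nonempty)
    (u v : EuclideanSpace ℝ (Fin 2))
    (mu Mu mv Mv wstar : ℝ)
    (hmu : mu = P.inf' hP fun p => (inner ℝ p u : ℝ))
    (hMu : Mu = P.sup' hP fun p => (inner ℝ p u : ℝ))
    (hmv : mv = P.inf' hP fun p => (inner ℝ p v : ℝ))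
    (hMv : Mv = P.sup' hP fun p => (inner ℝ p v : ℝ))
    (hw : wstar = P.sup' hP fun p =>
      min (min (Mu - (inner ℝ p u : ℝ)) ((inner ℝ p u : ℝ) - mu))
          (min (Mv - (inner ℝ p v : ℝ)) ((inner ℝ p v : ℝ) - mv))) :
    IsLeast {w : ℝ | 0 ≤ w ∧ ∃ c₁ d₁ c₂ d₂ : ℝ,
        c₁ + w ≤ d₁ - w ∧ c₂ + w ≤ d₂ - w ∧ ∀ p ∈ P,
          (c₁ ≤ (inner ℝ p u : ℝ) ∧ (inner ℝ p u : ℝ) ≤ d₁) ∧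
          (c₂ ≤ (inner ℝ p v : ℝ) ∧ (inner ℝ p v : ℝ) ≤ d₂) ∧
          ((inner ℝ p u : ℝ) ≤ c₁ + w ∨ d₁ - w ≤ (inner ℝ p u : ℝ) ∨
           (inner ℝ p v : ℝ) ≤ c₂ + w ∨ d₂ - w ≤ (inner ℝ p v : ℝ))}
      wstar := by
  subst hmu hMu hmv hMv hw
  exact isLeast_annulusWidths_depthWidth hP (fun p => inner ℝ p u) (fun p => inner ℝ p v)

/-- Minimum-width parallelogram annulus with fixed side normals: for a finite
nonempty `P ⊆ ℝ²` and linearly independent unit vectors `u, v`, the value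
`w* = max_{p∈P} min (d_p^u) (d_p^v)` is the least width `w ≥ 0` of a
parallelogram annulus with side normals `u` and `v` enclosing `P`; it is
attained by the annulus whose outer parallelogram is the intersection of the
two minimum-width strips enclosing `P`. -/
theorem minWidth_parallelogram_annulus_fixed_orientations
    (P : Finset (EuclideanSpace ℝ (Fin 2))) (hP : P.Nonempty)
    (u v : EuclideanSpace ℝ (Fin 2)) (hu : ‖u‖ = 1) (hv : ‖v‖ = 1)
    (huv : LinearIndependent ℝ ![u, v])
    (mu Mu mv Mv wstar : ℝ)
    (hmu : mu = P.inf' hP fun p => (inner ℝ p u : ℝ))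
    (hMu : Mu = P.sup' hP fun p => (inner ℝ p u : ℝ))
    (hmv : mv = P.inf' hP fun p => (inner ℝ p v : ℝ))
    (hMv : Mv = P.sup' hP fun p => (inner ℝ p v : ℝ))
    (hw : wstar = P.sup' hP fun p =>
      min (min (Mu - (inner ℝ p u : ℝ)) ((inner ℝ p u : ℝ) - mu))
          (min (Mv - (inner ℝ p v : ℝ)) ((inner ℝ p v : ℝ) - mv))) :
    IsLeast {w : ℝ | 0 ≤ w ∧ ∃ c₁ d₁ c₂ d₂ : ℝ,
        c₁ + w ≤ d₁ - w ∧ c₂ + w ≤ d₂ - w ∧ ∀ p ∈ P,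
          (c₁ ≤ (inner ℝ p u : ℝ) ∧ (inner ℝ p u : ℝ) ≤ d₁) ∧
          (c₂ ≤ (inner ℝ p v : ℝ) ∧ (inner ℝ p v : ℝ) ≤ d₂) ∧
          ((inner ℝ p u : ℝ) ≤ c₁ + w ∨ d₁ - w ≤ (inner ℝ p u : ℝ) ∨
           (inner ℝ p v : ℝ) ≤ c₂ + w ∨ d₂ - w ≤ (inner ℝ p v : ℝ))}
      wstar :=
  minWidth_parallelogram_annulus_fixed_orientations_general P hP u v mu Mu mv Mv wstar hmu hMu hmv
    hMv hw
end
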